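/- Let z be an integer with z ≥ 2 and let M be an element of the subgroup of SL(2,ℤ) generated by T_z and S_z. If the trace of the matrix underlying M · T_z · M⁻¹ · S_z equals the trace of the matrix underlying T_z · S_z, then there exist integers m and n such that M = S_z^n · T_z^m. -/

import Mathlib

/-- `Tz z` is the element of `SL(2,ℤ)` with underlying matrix `!![1, -z; 0, 1]`. -/
def Tz (z : ℤ) : Matrix.SpecialLinearGroup (Fin 2) ℤ :=
  ⟨!![1, -z; 0, 1], by simp [Matrix.det_fin_two_of]⟩

/-- `Sz z` is the element of `SL(2,ℤ)` with underlying matrix `!![1, 0; z, 1]`. -/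
def Sz (z : ℤ) : Matrix.SpecialLinearGroup (Fin 2) ℤ :=
  ⟨!![1, 0; z, 1], by simp [Matrix.det_fin_two_of]⟩

/-!
Every word in `Tz z` and `Sz z` is congruent to the identity modulo `z²` on the diagonal and
modulo `z` off it. For `M = !![a, b; c, d]` one computes `tr (M Tz M⁻¹ Sz) = 2 - z²a²`, while
`tr (Tz Sz) = 2 - z²`; hence `a = ±1`, and `a ≡ 1 [ZMOD z²]` with `z ≥ 2` forces `a = 1`.
A determinant-one matrix with `a = 1` equals `Sz c * Tz (-b)`, and `z ∣ b, c` turns this into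
powers of `Sz z` and `Tz z`.
-/

open Matrix MatrixGroups

@[simp]
lemma coe_Tz (z : ℤ) : (Tz z : Matrix (Fin 2) (Fin 2) ℤ) = !![1, -z; 0, 1] := rfl

@[simp]
lemma coe_Sz (z : ℤ) : (Sz z : Matrix (Fin 2) (Fin 2) ℤ) = !![1, 0; z, 1] := rfl

lemma Tz_zero : Tz 0 = 1 := by
  ext i j; fin_cases i <;> fin_cases j <;> simp

lemma Tz_add (a b : ℤ) : Tz (a + b) = Tz a * Tz b := by
  ext i j; fin_cases i <;> fin_cases j <;> simp

lemma Sz_zero : Sz 0 = 1 := by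
  ext i j; fin_cases i <;> fin_cases j <;> simp

lemma Sz_add (a b : ℤ) : Sz (a + b) = Sz a * Sz b := by
  ext i j; fin_cases i <;> fin_cases j <;> simp

lemma Tz_zpow (z n : ℤ) : Tz z ^ n = Tz (n * z) := by
  induction n using Int.induction_on with
  | zero => simp [Tz_zero]
  | succ k ih => rw [_root_.zpow_add_one, ih, ← Tz_add]; ring_nf
  | pred k ih => rw [_root_.zpow_sub_one, ih, mul_inv_eq_iff_eq_mul, ← Tz_add]; ring_nf

lemma Sz_zpow (z n : ℤ) : Sz z ^ n = Sz (n * z) := by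
  induction n using Int.induction_on with
  | zero => simp [Sz_zero]
  | succ k ih => rw [_root_.zpow_add_one, ih, ← Sz_add]; ring_nf
  | pred k ih => rw [_root_.zpow_sub_one, ih, mul_inv_eq_iff_eq_mul, ← Sz_add]; ring_nf

lemma eq_Sz_mul_Tz_of_apply_zero_zero_eq_one {M : SL(2, ℤ)} (hM : M 0 0 = 1) :
    M = Sz (M 1 0) * Tz (-M 0 1) := by
  have hdet := M.det_coe
  rw [det_fin_two, hM] at hdet
  ext i j; fin_cases i <;> fin_cases j <;> simp [hM]; linarith

lemma trace_conj_Tz_mul_Sz (z : ℤ) (M : SL(2, ℤ)) :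
    trace (↑(M * Tz z * M⁻¹ * Sz z) : Matrix (Fin 2) (Fin 2) ℤ) = 2 - z ^ 2 * M 0 0 ^ 2 := by
  have hdet := M.det_coe
  rw [det_fin_two] at hdet
  simp [adjugate_fin_two, trace_fin_two, mul_apply, Fin.sum_univ_two]
  linear_combination 2 * hdet

lemma trace_Tz_mul_Sz (z : ℤ) :
    trace (↑(Tz z * Sz z) : Matrix (Fin 2) (Fin 2) ℤ) = 2 - z ^ 2 := by
  simpa using trace_conj_Tz_mul_Sz z 1

lemma sq_dvd_mul_add_mul_sub_one {R : Type*} [CommRing R] {z a a' b c : R}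
    (ha : z ^ 2 ∣ a - 1) (ha' : z ^ 2 ∣ a' - 1) (hb : z ∣ b) (hc : z ∣ c) :
    z ^ 2 ∣ a * a' + b * c - 1 := by
  have hbc : z ^ 2 ∣ b * c := pow_two z ▸ mul_dvd_mul hb hc
  have key : a * a' + b * c - 1 = (a - 1) * (a' - 1) + (a - 1) + (a' - 1) + b * c := by ring
  rw [key]
  exact (((dvd_mul_of_dvd_left ha _).add ha).add ha').add hbc

def sqDiagCongrSubgroup {R : Type*} [CommRing R] (z : R) : Subgroup SL(2, R) where
  carrier := {M | z ∣ M 0 1 ∧ z ∣ M 1 0 ∧ z ^ 2 ∣ M 0 0 - 1 ∧ z ^ 2 ∣ M 1 1 - 1}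
  one_mem' := by simp
  mul_mem' := by
    rintro x y ⟨hb, hc, ha, hd⟩ ⟨hb', hc', ha', hd'⟩
    have hmul (i j : Fin 2) : (x * y) i j = x i 0 * y 0 j + x i 1 * y 1 j := by
      simp [mul_apply, Fin.sum_univ_two]
    simp only [Set.mem_ofPred_eq, hmul]
    refine ⟨(dvd_mul_of_dvd_right hb' _).add (dvd_mul_of_dvd_left hb _),
      (dvd_mul_of_dvd_left hc _).add (dvd_mul_of_dvd_right hc' _),
      sq_dvd_mul_add_mul_sub_one ha ha' hb hc', ?_⟩
    rw [add_comm]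
    exact sq_dvd_mul_add_mul_sub_one hd hd' hc hb'
  inv_mem' := by
    rintro M ⟨hb, hc, ha, hd⟩
    rw [SpecialLinearGroup.SL2_inv_expl]
    exact ⟨dvd_neg.mpr hb, dvd_neg.mpr hc, hd, ha⟩

lemma mem_sqDiagCongrSubgroup {R : Type*} [CommRing R] {z : R} {M : SL(2, R)} :
    M ∈ sqDiagCongrSubgroup z ↔
      z ∣ M 0 1 ∧ z ∣ M 1 0 ∧ z ^ 2 ∣ M 0 0 - 1 ∧ z ^ 2 ∣ M 1 1 - 1 :=
  Iff.rfl

lemma closure_Tz_Sz_le (z : ℤ) : Subgroup.closure {Tz z, Sz z} ≤ sqDiagCongrSubgroup z := by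
  rw [Subgroup.closure_le]
  rintro _ (rfl | rfl) <;> simp [mem_sqDiagCongrSubgroup]

lemma eq_one_of_sq_eq_one_of_sq_dvd_sub_one {z a : ℤ} (hz : 2 ≤ z) (ha : a ^ 2 = 1)
    (hdvd : z ^ 2 ∣ a - 1) : a = 1 := by
  rcases sq_eq_one_iff.mp ha with rfl | rfl
  · rfl
  · have h4 : 4 ≤ z ^ 2 := by nlinarith
    have := Int.le_of_dvd (by norm_num) (dvd_neg.mpr hdvd)
    omega

theorem stmt_7 (z : ℤ) (hz : 2 ≤ z) (M : Matrix.SpecialLinearGroup (Fin 2) ℤ)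
    (hM : M ∈ Subgroup.closure {Tz z, Sz z})
    (htr : Matrix.trace ((M * Tz z * M⁻¹ * Sz z : Matrix.SpecialLinearGroup (Fin 2) ℤ) :
        Matrix (Fin 2) (Fin 2) ℤ)
      = Matrix.trace ((Tz z * Sz z : Matrix.SpecialLinearGroup (Fin 2) ℤ) :
        Matrix (Fin 2) (Fin 2) ℤ)) :
    ∃ m n : ℤ, M = Sz z ^ n * Tz z ^ m := by
  obtain ⟨⟨b, hb⟩, ⟨c, hc⟩, ha, -⟩ := closure_Tz_Sz_le z hM
  have ha2 : M 0 0 ^ 2 = 1 := by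
    rw [trace_conj_Tz_mul_Sz, trace_Tz_mul_Sz] at htr
    have hz2 : z ^ 2 ≠ 0 := pow_ne_zero 2 (by omega)
    exact mul_left_cancel₀ hz2 (by linarith)
  refine ⟨-b, c, ?_⟩
  rw [Sz_zpow, Tz_zpow, eq_Sz_mul_Tz_of_apply_zero_zero_eq_one
    (eq_one_of_sq_eq_one_of_sq_dvd_sub_one hz ha2 ha), hb, hc]
  ring_nf
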